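/- arXiv:2206.05560 — 4 statements merged into one kernel-verified Lean document; each statement's English description precedes it below -/
import Mathlib

section
/- Let p be a prime and let P = X^g + a_{g−1}X^{g−1} + ⋯ + a_1 X + a_0 ∈ ℤ_p[X] be a monic polynomial of degree g ≥ 1 (set a_g = 1). Let S = ℤ_p[X]/(P) with π the image of X, and let M be any S-module. Define Φ : M → M ⊗_{ℤ_p} S by Φ(m) = Σ_{i=0}^{g−1} ((Σ_{k=i+1}^{g} a_k π^{k−i−1}) • m) ⊗ π^i. Then Φ is an injective ℤ_p-linear map whose image is exactly the set of x ∈ M ⊗_{ℤ_p} S satisfying (π • ⊗ id)(x) = (id ⊗ (π·))(x); that is, Φ is a ℤ_p-linear bijection from M onto the common-eigenvector submodule {x ∈ M ⊗_{ℤ_p} S : the action of π through the M-factor on x equals multiplication by 1 ⊗ π on x}. -/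
/-!
Write `x ∈ M ⊗ S` as `∑ xᵢ ⊗ πⁱ` in the basis `1, π, …, π^(g-1)`. Multiplying the second factor
by `π` shifts the coordinates and rewrites `π^g` using `P`, so the eigenvector equation reads
`π • x₀ = -a₀ • y` and `π • xᵢ₊₁ = xᵢ - aᵢ₊₁ • y`, where `y = x_(g-1)` is the top coordinate.
Run backwards from `y`, this is Horner's scheme for `P` at `π`: `xᵢ = cᵢ • y` with
`cᵢ = ∑_{k > i} aₖ π^(k-i-1)`, and the remaining equation at `i = 0` is exactly `P(π) = 0`.
The vector with coordinates `cᵢ • m` is `Φ m`.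
-/

open Polynomial TensorProduct

section Horner

variable {R A : Type*} [CommSemiring R] [Semiring A] [Algebra R A]

/-- Horner's scheme for evaluating `P` at `a`: `hornerCoeff P a 0 = P(a)`, and for `j ≥ 1` this
is the coefficient of `X ^ (j - 1)` in the quotient of `P` by `X - a`. -/
def hornerCoeff (P : R[X]) (a : A) (j : ℕ) : A :=
  ∑ k ∈ Finset.Icc j P.natDegree, P.coeff k • a ^ (k - j)

theorem hornerCoeff_zero (P : R[X]) (a : A) : hornerCoeff P a 0 = aeval a P := by
  simp [hornerCoeff, aeval_eq_sum_range, Nat.range_succ_eq_Icc_zero]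

theorem hornerCoeff_natDegree {P : R[X]} (hP : P.Monic) (a : A) :
    hornerCoeff P a P.natDegree = 1 := by
  simp [hornerCoeff, hP.coeff_natDegree]

theorem hornerCoeff_eq_add_mul (P : R[X]) (a : A) (j : ℕ) :
    hornerCoeff P a j = algebraMap R A (P.coeff j) + a * hornerCoeff P a (j + 1) := by
  rcases le_or_gt j P.natDegree with hj | hj
  · rw [hornerCoeff, ← Finset.Ioc_insert_left hj, Finset.sum_insert Finset.left_notMem_Ioc,
      ← Finset.Icc_add_one_left_eq_Ioc, hornerCoeff, Finset.mul_sum, Nat.sub_self, pow_zero,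
      Algebra.smul_def, mul_one]
    congr 1
    refine Finset.sum_congr rfl fun k hk => ?_
    rw [mul_smul_comm, ← pow_succ']
    congr 2
    have := (Finset.mem_Icc.1 hk).1
    omega
  · simp [hornerCoeff, Finset.Icc_eq_empty_of_lt hj,
      Finset.Icc_eq_empty_of_lt (hj.trans j.lt_succ_self), P.coeff_eq_zero_of_natDegree_lt hj]

end Horner

namespace AdjoinRoot

variable {R : Type*} [CommRing R] {P : R[X]} (hP : P.Monic)

theorem coeff_modByMonicHom_eq_zero (s : AdjoinRoot P) {k : ℕ} (hk : P.natDegree ≤ k) :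
    (modByMonicHom hP s).coeff k = 0 := by
  nontriviality R
  induction s using AdjoinRoot.induction_on with
  | ih f =>
    refine coeff_eq_zero_of_degree_lt ((degree_modByMonic_lt f hP).trans_le ?_)
    exact (degree_le_natDegree).trans (by exact_mod_cast hk)

theorem modByMonicHom_root_pow {j : ℕ} (hj : j < P.natDegree) :
    modByMonicHom hP (root P ^ j) = X ^ j := by
  nontriviality R
  rw [← mk_X, ← map_pow, modByMonicHom_mk, modByMonic_eq_self_iff hP, degree_X_pow,
    degree_eq_natDegree hP.ne_zero]
  exact_mod_cast hj

theorem modByMonicHom_root_mul {n : ℕ} (hdeg : P.natDegree = n + 1) (s : AdjoinRoot P) :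
    modByMonicHom hP (root P * s) =
      X * modByMonicHom hP s - C ((modByMonicHom hP s).coeff n) * P := by
  nontriviality R
  set q := modByMonicHom hP s
  have hP_deg : P.degree = (n + 1 : ℕ) := by rw [degree_eq_natDegree hP.ne_zero, hdeg]
  have hs : mk P q = s := mk_leftInverse hP s
  rw [← hs, ← mk_X, ← map_mul, modByMonicHom_mk,
    modByMonic_eq_of_dvd_sub (p₂ := X * q - C (q.coeff n) * P) hP
      (by rw [sub_sub_cancel]; exact dvd_mul_left P _),
    modByMonic_eq_self_iff hP, hP_deg, degree_lt_iff_coeff_zero]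
  intro m hm
  obtain ⟨k, rfl⟩ := Nat.exists_eq_add_of_le' (Nat.one_le_of_lt hm)
  rw [coeff_sub, coeff_X_mul, coeff_C_mul]
  rcases (Nat.le_of_succ_le_succ (by exact_mod_cast hm)).eq_or_lt with rfl | hk
  · rw [← hdeg, hP.coeff_natDegree, mul_one, sub_self]
  · have hq_top : q.coeff k = 0 := coeff_modByMonicHom_eq_zero hP s (by omega)
    rw [hq_top, P.coeff_eq_zero_of_natDegree_lt (by omega), mul_zero, sub_zero]

theorem sum_coeff_modByMonicHom_smul_root_pow (s : AdjoinRoot P) :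
    ∑ i ∈ Finset.range P.natDegree, (modByMonicHom hP s).coeff i • root P ^ i = s := by
  rw [← Fin.sum_univ_eq_sum_range (fun i => (modByMonicHom hP s).coeff i • root P ^ i)]
  have h := (powerBasis' hP).basis.sum_repr s
  simp only [PowerBasis.coe_basis, powerBasis'_gen] at h
  exact h

variable (M : Type*) [AddCommGroup M] [Module R M]

/-- The coefficient of `root P ^ i` in the expansion `x = ∑ i < deg P, xᵢ ⊗ root P ^ i`. -/
noncomputable def tensorCoeff (i : ℕ) : M ⊗[R] AdjoinRoot P →ₗ[R] M :=
  (TensorProduct.rid R M).toLinearMap ∘ₗ (lcoeff R i ∘ₗ modByMonicHom hP).lTensor M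

variable {M}

theorem tensorCoeff_tmul (i : ℕ) (m : M) (s : AdjoinRoot P) :
    tensorCoeff hP M i (m ⊗ₜ s) = (modByMonicHom hP s).coeff i • m := by
  simp [tensorCoeff]

theorem sum_tensorCoeff_tmul_root_pow (x : M ⊗[R] AdjoinRoot P) :
    ∑ i ∈ Finset.range P.natDegree, tensorCoeff hP M i x ⊗ₜ (root P ^ i) = x := by
  induction x using TensorProduct.induction_on with
  | zero => simp
  | tmul m s =>
    simp_rw [tensorCoeff_tmul, smul_tmul, ← tmul_sum, sum_coeff_modByMonicHom_smul_root_pow]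
  | add x y hx hy => simp only [map_add, add_tmul, Finset.sum_add_distrib, hx, hy]

theorem tensorCoeff_sum_tmul_root_pow (f : ℕ → M) {i : ℕ} (hi : i < P.natDegree) :
    tensorCoeff hP M i (∑ j ∈ Finset.range P.natDegree, f j ⊗ₜ (root P ^ j)) = f i := by
  rw [map_sum, Finset.sum_eq_single_of_mem i (Finset.mem_range.2 hi)]
  · rw [tensorCoeff_tmul, modByMonicHom_root_pow hP hi, coeff_X_pow_self, one_smul]
  · intro j hj hji
    rw [tensorCoeff_tmul, modByMonicHom_root_pow hP (Finset.mem_range.1 hj), coeff_X_pow,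
      if_neg hji.symm, zero_smul]

theorem tensorCoeff_ext {x y : M ⊗[R] AdjoinRoot P}
    (h : ∀ i < P.natDegree, tensorCoeff hP M i x = tensorCoeff hP M i y) : x = y := by
  rw [← sum_tensorCoeff_tmul_root_pow hP x, ← sum_tensorCoeff_tmul_root_pow hP y]
  exact Finset.sum_congr rfl fun i hi => by rw [h i (Finset.mem_range.1 hi)]

theorem tensorCoeff_zero_lTensor_mulLeft_root {n : ℕ} (hdeg : P.natDegree = n + 1)
    (x : M ⊗[R] AdjoinRoot P) :
    tensorCoeff hP M 0 ((LinearMap.mulLeft R (root P)).lTensor M x) =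
      -(P.coeff 0 • tensorCoeff hP M n x) := by
  induction x using TensorProduct.induction_on with
  | zero => simp
  | tmul m s =>
    rw [LinearMap.lTensor_tmul, LinearMap.mulLeft_apply, tensorCoeff_tmul, tensorCoeff_tmul,
      modByMonicHom_root_mul hP hdeg, coeff_sub, coeff_X_mul_zero, coeff_C_mul, zero_sub,
      neg_smul, mul_comm, mul_smul]
  | add x y hx hy => simp only [map_add, hx, hy, smul_add, neg_add]

theorem tensorCoeff_succ_lTensor_mulLeft_root {n : ℕ} (hdeg : P.natDegree = n + 1)
    (i : ℕ) (x : M ⊗[R] AdjoinRoot P) :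
    tensorCoeff hP M (i + 1) ((LinearMap.mulLeft R (root P)).lTensor M x) =
      tensorCoeff hP M i x - P.coeff (i + 1) • tensorCoeff hP M n x := by
  induction x using TensorProduct.induction_on with
  | zero => simp
  | tmul m s =>
    rw [LinearMap.lTensor_tmul, LinearMap.mulLeft_apply, tensorCoeff_tmul, tensorCoeff_tmul,
      tensorCoeff_tmul, modByMonicHom_root_mul hP hdeg, coeff_sub, coeff_X_mul, coeff_C_mul,
      sub_smul, mul_comm, mul_smul]
  | add x y hx hy => simp only [map_add, hx, hy, smul_add]; abel

variable [Module (AdjoinRoot P) M] [IsScalarTower R (AdjoinRoot P) M]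

theorem tensorCoeff_rTensor_lsmul (a : AdjoinRoot P) (i : ℕ) (x : M ⊗[R] AdjoinRoot P) :
    tensorCoeff hP M i
        (((LinearMap.lsmul (AdjoinRoot P) M a).restrictScalars R).rTensor (AdjoinRoot P) x) =
      a • tensorCoeff hP M i x := by
  induction x using TensorProduct.induction_on with
  | zero => simp
  | tmul m s =>
    rw [LinearMap.rTensor_tmul, LinearMap.restrictScalars_apply, LinearMap.lsmul_apply,
      tensorCoeff_tmul, tensorCoeff_tmul, smul_comm]
  | add x y hx hy => simp only [map_add, hx, hy, smul_add]

theorem rTensor_lsmul_root_eq_lTensor_mulLeft_root_iff {n : ℕ} (hdeg : P.natDegree = n + 1)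
    (x : M ⊗[R] AdjoinRoot P) :
    ((LinearMap.lsmul (AdjoinRoot P) M (root P)).restrictScalars R).rTensor (AdjoinRoot P) x =
        (LinearMap.mulLeft R (root P)).lTensor M x ↔
      ∀ i ≤ n, tensorCoeff hP M i x = hornerCoeff P (root P) (i + 1) • tensorCoeff hP M n x := by
  have horner_succ (i : ℕ) (y : M) : hornerCoeff P (root P) (i + 1) • y =
      P.coeff (i + 1) • y + root P • hornerCoeff P (root P) (i + 2) • y := by
    rw [hornerCoeff_eq_add_mul, add_smul, algebraMap_smul, mul_smul]
  constructor
  · intro hx i hi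
    induction hi using Nat.decreasingInduction with
    | self => rw [← hdeg, hornerCoeff_natDegree hP, one_smul]
    | of_succ i hi ih =>
      have hcoeff := congrArg (tensorCoeff hP M (i + 1)) hx
      rw [tensorCoeff_rTensor_lsmul, tensorCoeff_succ_lTensor_mulLeft_root hP hdeg, ih] at hcoeff
      rw [horner_succ, hcoeff, add_sub_cancel]
  · intro hx
    refine tensorCoeff_ext hP fun i hi => ?_
    rw [tensorCoeff_rTensor_lsmul]
    cases i with
    | zero =>
      have hroot : root P * hornerCoeff P (root P) 1 = -algebraMap R _ (P.coeff 0) := by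
        rw [eq_neg_iff_add_eq_zero, add_comm, ← hornerCoeff_eq_add_mul, hornerCoeff_zero,
          aeval_eq, mk_self]
      rw [tensorCoeff_zero_lTensor_mulLeft_root hP hdeg, hx 0 (by omega), smul_smul, hroot,
        neg_smul, algebraMap_smul]
    | succ i =>
      rw [tensorCoeff_succ_lTensor_mulLeft_root hP hdeg, hx (i + 1) (by omega), hx i (by omega),
        horner_succ i, add_sub_cancel_left]

end AdjoinRoot

open AdjoinRoot in
/-- Let `P = X^g + a_{g-1}X^{g-1} + ⋯ + a_0 ∈ ℤ_p[X]` be monic of degree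
`g ≥ 1`, let `S = ℤ_p[X]/(P)` with `π` the image of `X`, and let `M` be any `S`-module.
The `ℤ_p`-linear map `Φ : M → M ⊗_{ℤ_p} S`,
`Φ(m) = Σ_{i=0}^{g-1} ((Σ_{k=i+1}^{g} a_k π^{k-i-1}) • m) ⊗ π^i`, is injective with image
exactly the set of `x` on which the action of `π` through `M` agrees with multiplication
by `π` on the second tensor factor. -/
theorem eigenvector_map_injective_range (p : ℕ) [Fact p.Prime] (g : ℕ) (hg : 1 ≤ g)
    (P : Polynomial ℤ_[p]) (hmonic : P.Monic) (hdeg : P.natDegree = g)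
    (M : Type*) [AddCommGroup M] [Module ℤ_[p] M] [Module (AdjoinRoot P) M]
    [IsScalarTower ℤ_[p] (AdjoinRoot P) M]
    (Φ : M →ₗ[ℤ_[p]] M ⊗[ℤ_[p]] AdjoinRoot P)
    (hΦ : ∀ m : M, Φ m = ∑ i ∈ Finset.range g,
      ((∑ k ∈ Finset.Icc (i + 1) g, P.coeff k • AdjoinRoot.root P ^ (k - i - 1)) • m)
        ⊗ₜ[ℤ_[p]] (AdjoinRoot.root P ^ i)) :
    Function.Injective Φ ∧
      Set.range Φ =
        {x : M ⊗[ℤ_[p]] AdjoinRoot P |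
          LinearMap.rTensor (AdjoinRoot P)
              ((LinearMap.lsmul (AdjoinRoot P) M (AdjoinRoot.root P)).restrictScalars ℤ_[p]) x =
            LinearMap.lTensor M (LinearMap.mulLeft ℤ_[p] (AdjoinRoot.root P)) x} := by
  obtain ⟨n, rfl⟩ := Nat.exists_eq_add_of_le' hg
  have tensorCoeff_Φ (m : M) {i : ℕ} (hi : i ≤ n) :
      tensorCoeff hmonic M i (Φ m) = hornerCoeff P (root P) (i + 1) • m := by
    simp_rw [hΦ, Nat.sub_sub, ← hdeg]
    exact tensorCoeff_sum_tmul_root_pow hmonic _ (by omega)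
  have tensorCoeff_top_Φ (m : M) : tensorCoeff hmonic M n (Φ m) = m := by
    rw [tensorCoeff_Φ m le_rfl, ← hdeg, hornerCoeff_natDegree hmonic, one_smul]
  refine ⟨fun m m' h => by rw [← tensorCoeff_top_Φ m, h, tensorCoeff_top_Φ], ?_⟩
  ext x
  rw [Set.mem_ofPred_eq, rTensor_lsmul_root_eq_lTensor_mulLeft_root_iff hmonic hdeg]
  constructor
  · rintro ⟨m, rfl⟩ i hi
    rw [tensorCoeff_Φ m hi, tensorCoeff_top_Φ]
  · intro hx
    refine ⟨tensorCoeff hmonic M n x, tensorCoeff_ext hmonic fun i hi => ?_⟩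
    rw [tensorCoeff_Φ _ (by omega), hx i (by omega)]
end

section
/- Let p be a prime and let P = X^g + a_{g−1}X^{g−1} + ⋯ + a_0 ∈ ℤ_p[X] be a monic polynomial of degree g ≥ 1 (set a_g = 1) which is Eisenstein at p (p divides a_i for all i < g and p² does not divide a_0). Let S = ℤ_p[X]/(P) with π the image of X. Let B : S × S → ℤ_p be a ℤ_p-bilinear form such that B(t·x, y) = B(x, t·y) for all t, x, y ∈ S and such that B is perfect, i.e., the induced ℤ_p-linear map S → Hom_{ℤ_p}(S, ℤ_p), x ↦ B(x, ·), is bijective. Let e := Σ_{i=0}^{g−1} (Σ_{k=i+1}^{g} a_k π^{k−i−1}) ⊗ π^i ∈ S ⊗_{ℤ_p} S, and let B_S denote the S-valued extension of B determined by B_S(x ⊗ a, y ⊗ b) = B(x, y)·a·b. Then for all units u, u′ ∈ S^×, the element B_S((u ⊗ 1)·e, (u′ ⊗ 1)·e) ∈ S is an associate of P′(π) (the value at π of the derivative of P) in S. -/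
/-!
The element `e` is the image of `P(X) / (X - π) ∈ S[X]` under `X ↦ 1 ⊗ π`, so
`(π ⊗ 1 - 1 ⊗ π) e = 1 ⊗ P(π) = 0`, i.e. `(x ⊗ 1) e = (1 ⊗ x) e` for every `x ∈ S`.
Since `B_S` is `S`-bilinear for the right factor and `t ⊗ 1` is self-adjoint for it, this gives
`B_S(v, e) = μ(v) w` with `μ : S ⊗ S → S` the multiplication and `w = B_S(1, e)`. Hence
`B_S((u ⊗ 1) e, (u' ⊗ 1) e) = u u' μ(e) w`, and `μ(e) = (P / (X - π))(π) = P'(π)`.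
Finally `w` is a unit: by perfectness some `z` has `B(z, ·)` equal to the coordinate of
`π^(g-1)`, and that coordinate of the `i`-th coefficient of `e` is `1` for `i = 0` and `0`
otherwise, so `z w = 1`.
-/

open TensorProduct Polynomial

section ScalarExtension

variable {R S : Type*} [CommRing R] [CommRing S] [Algebra R S]

def IsScalarExtension (B : S →ₗ[R] S →ₗ[R] R)
    (BS : (S ⊗[R] S) →ₗ[R] (S ⊗[R] S) →ₗ[R] S) : Prop :=
  ∀ x a y b : S, BS (x ⊗ₜ[R] a) (y ⊗ₜ[R] b) = B x y • (a * b)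

namespace IsScalarExtension

variable {B : S →ₗ[R] S →ₗ[R] R} {BS : (S ⊗[R] S) →ₗ[R] (S ⊗[R] S) →ₗ[R] S}
  (hBS : IsScalarExtension B BS)
include hBS

theorem apply_one_tmul_mul_left (t : S) (u v : S ⊗[R] S) :
    BS (((1 : S) ⊗ₜ[R] t) * u) v = t * BS u v := by
  induction u using TensorProduct.induction_on with
  | zero => simp
  | add u₁ u₂ h₁ h₂ => simp only [mul_add, map_add, LinearMap.add_apply, h₁, h₂]
  | tmul x a =>
    induction v using TensorProduct.induction_on with
    | zero => simp
    | add v₁ v₂ h₁ h₂ => simp only [map_add, h₁, h₂, mul_add]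
    | tmul y b =>
      rw [Algebra.TensorProduct.tmul_mul_tmul, one_mul, hBS, hBS, mul_smul_comm, mul_assoc]

theorem apply_one_tmul_mul_right (t : S) (u v : S ⊗[R] S) :
    BS u (((1 : S) ⊗ₜ[R] t) * v) = t * BS u v := by
  induction v using TensorProduct.induction_on with
  | zero => simp
  | add v₁ v₂ h₁ h₂ => simp only [mul_add, map_add, h₁, h₂]
  | tmul y b =>
    induction u using TensorProduct.induction_on with
    | zero => simp
    | add u₁ u₂ h₁ h₂ => simp only [map_add, LinearMap.add_apply, h₁, h₂, mul_add]
    | tmul x a =>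
      rw [Algebra.TensorProduct.tmul_mul_tmul, one_mul, hBS, hBS, mul_smul_comm, mul_left_comm]

theorem apply_tmul_one_mul_swap (hsym : ∀ t x y : S, B (t * x) y = B x (t * y))
    (t : S) (u v : S ⊗[R] S) :
    BS ((t ⊗ₜ[R] (1 : S)) * u) v = BS u ((t ⊗ₜ[R] (1 : S)) * v) := by
  induction u using TensorProduct.induction_on with
  | zero => simp
  | add u₁ u₂ h₁ h₂ => simp only [mul_add, map_add, LinearMap.add_apply, h₁, h₂]
  | tmul x a =>
    induction v using TensorProduct.induction_on with
    | zero => simp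
    | add v₁ v₂ h₁ h₂ => simp only [mul_add, map_add, h₁, h₂]
    | tmul y b =>
      rw [Algebra.TensorProduct.tmul_mul_tmul, Algebra.TensorProduct.tmul_mul_tmul, one_mul,
        one_mul, hBS, hBS, hsym]

theorem apply_eq_lmul'_mul (hsym : ∀ t x y : S, B (t * x) y = B x (t * y))
    {e : S ⊗[R] S} (he : ∀ x : S, (x ⊗ₜ[R] (1 : S)) * e = ((1 : S) ⊗ₜ[R] x) * e)
    (v : S ⊗[R] S) :
    BS v e = Algebra.TensorProduct.lmul' R v * BS 1 e := by
  induction v using TensorProduct.induction_on with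
  | zero => simp
  | add v₁ v₂ h₁ h₂ => simp only [map_add, LinearMap.add_apply, h₁, h₂, add_mul]
  | tmul x y =>
    have hxy : x ⊗ₜ[R] y = ((1 : S) ⊗ₜ[R] y) * ((x ⊗ₜ[R] (1 : S)) * 1) := by
      rw [mul_one, Algebra.TensorProduct.tmul_mul_tmul, one_mul, mul_one]
    rw [hxy, hBS.apply_one_tmul_mul_left, hBS.apply_tmul_one_mul_swap hsym, he,
      hBS.apply_one_tmul_mul_right, ← hxy, Algebra.TensorProduct.lmul'_apply_tmul]
    ring

end IsScalarExtension

end ScalarExtension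

theorem Algebra.TensorProduct.lmul'_aeval_one_tmul {R S : Type*} [CommRing R] [CommRing S]
    [Algebra R S] (Q : S[X]) (s : S) :
    lmul' R (aeval ((1 : S) ⊗ₜ[R] s) Q) = Q.eval s := by
  have hid : ((lmul' R : S ⊗[R] S →ₐ[R] S) : S ⊗[R] S →+* S).comp
      (algebraMap S (S ⊗[R] S)) = RingHom.id S := by
    ext s; simp
  rw [aeval_def, ← AlgHom.coe_toRingHom, hom_eval₂, hid, AlgHom.coe_toRingHom,
    lmul'_apply_tmul, one_mul]
  rfl

namespace AdjoinRoot

variable {R : Type*} [CommRing R] {P : R[X]}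

noncomputable def divXSubRoot (P : R[X]) : (AdjoinRoot P)[X] :=
  P.map (algebraMap R (AdjoinRoot P)) /ₘ (X - C (root P))

theorem X_sub_C_root_mul_divXSubRoot (P : R[X]) :
    (X - C (root P)) * divXSubRoot P = P.map (algebraMap R (AdjoinRoot P)) :=
  mul_divByMonic_eq_iff_isRoot.mpr (isRoot_root P)

theorem eval_root_divXSubRoot (P : R[X]) :
    (divXSubRoot P).eval (root P) = aeval (root P) (derivative P) := by
  have h := congrArg (fun q => (derivative q).eval (root P)) (X_sub_C_root_mul_divXSubRoot P)
  simpa [derivative_mul, derivative_map, eval_map, aeval_def] using h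

theorem natDegree_divXSubRoot_lt (hP : 0 < P.natDegree) :
    (divXSubRoot P).natDegree < P.natDegree := by
  rcases subsingleton_or_nontrivial (AdjoinRoot P) with _ | _
  · rwa [Subsingleton.elim (divXSubRoot P) 0, natDegree_zero]
  · rw [divXSubRoot, natDegree_divByMonic _ (monic_X_sub_C _), natDegree_X_sub_C]
    have := natDegree_map_le (f := algebraMap R (AdjoinRoot P)) (p := P)
    omega

theorem coeff_divXSubRoot (hm : P.Monic) (i : ℕ) :
    (divXSubRoot P).coeff i =
      ∑ k ∈ Finset.Icc (i + 1) P.natDegree, P.coeff k • root P ^ (k - i - 1) := by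
  nontriviality AdjoinRoot P
  rw [divXSubRoot, coeff_divByMonic_X_sub_C, hm.natDegree_map]
  refine Finset.sum_congr rfl fun k _ => ?_
  rw [coeff_map, Algebra.smul_def, mul_comm, Nat.sub_sub]

noncomputable def eigenvector (P : R[X]) : AdjoinRoot P ⊗[R] AdjoinRoot P :=
  aeval ((1 : AdjoinRoot P) ⊗ₜ[R] root P) (divXSubRoot P)

theorem eigenvector_eq_sum_coeff (hP : 0 < P.natDegree) :
    eigenvector P =
      ∑ i ∈ Finset.range P.natDegree, (divXSubRoot P).coeff i ⊗ₜ[R] (root P ^ i) := by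
  rw [eigenvector, aeval_eq_sum_range' (natDegree_divXSubRoot_lt hP)]
  refine Finset.sum_congr rfl fun i _ => ?_
  rw [Algebra.smul_def, Algebra.TensorProduct.algebraMap_apply, Algebra.TensorProduct.tmul_pow,
    one_pow, Algebra.TensorProduct.tmul_mul_tmul, mul_one, one_mul, Algebra.algebraMap_self,
    RingHom.id_apply]

theorem eigenvector_eq_sum (hm : P.Monic) (hP : 0 < P.natDegree) :
    eigenvector P = ∑ i ∈ Finset.range P.natDegree,
      (∑ k ∈ Finset.Icc (i + 1) P.natDegree, P.coeff k • root P ^ (k - i - 1))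
        ⊗ₜ[R] (root P ^ i) := by
  simp only [eigenvector_eq_sum_coeff hP, coeff_divXSubRoot hm]

theorem root_tmul_one_mul_eigenvector (P : R[X]) :
    (root P ⊗ₜ[R] (1 : AdjoinRoot P)) * eigenvector P = (1 ⊗ₜ[R] root P) * eigenvector P := by
  have hroot : aeval ((1 : AdjoinRoot P) ⊗ₜ[R] root P) P = 0 := by
    rw [← Algebra.TensorProduct.includeRight_apply, aeval_algHom_apply, aeval_eq, mk_self,
      map_zero]
  have h := congrArg (aeval ((1 : AdjoinRoot P) ⊗ₜ[R] root P)) (X_sub_C_root_mul_divXSubRoot P)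
  rw [map_mul, ← eigenvector, aeval_map_algebraMap, hroot] at h
  simp only [map_sub, aeval_X, aeval_C, Algebra.TensorProduct.algebraMap_apply,
    Algebra.algebraMap_self, RingHom.id_apply] at h
  linear_combination -h

theorem tmul_one_mul_eigenvector (x : AdjoinRoot P) :
    (x ⊗ₜ[R] (1 : AdjoinRoot P)) * eigenvector P = (1 ⊗ₜ[R] x) * eigenvector P := by
  obtain ⟨q, rfl⟩ := mk_surjective x
  rw [← aeval_eq, ← Algebra.TensorProduct.includeLeft_apply (S := R),
    ← Algebra.TensorProduct.includeRight_apply, ← aeval_algHom_apply, ← aeval_algHom_apply,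
    Algebra.TensorProduct.includeLeft_apply, Algebra.TensorProduct.includeRight_apply,
    ← sub_eq_zero, ← sub_mul]
  obtain ⟨r, hr⟩ := sub_dvd_eval_sub (root P ⊗ₜ[R] (1 : AdjoinRoot P)) (1 ⊗ₜ[R] root P)
    (q.map (algebraMap R _))
  rw [aeval_def, aeval_def, eval₂_eq_eval_map, eval₂_eq_eval_map, hr, mul_right_comm,
    sub_mul, root_tmul_one_mul_eigenvector, sub_self, zero_mul]

theorem lmul'_eigenvector (P : R[X]) :
    Algebra.TensorProduct.lmul' R (eigenvector P) = aeval (root P) (derivative P) := by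
  rw [eigenvector, Algebra.TensorProduct.lmul'_aeval_one_tmul, eval_root_divXSubRoot]

noncomputable def topCoeff (hm : P.Monic) : AdjoinRoot P →ₗ[R] R :=
  (lcoeff R (P.natDegree - 1)).comp (modByMonicHom hm)

theorem topCoeff_root_pow (hm : P.Monic) {m : ℕ} (hmP : m < P.natDegree) :
    topCoeff hm (root P ^ m) = if m = P.natDegree - 1 then 1 else 0 := by
  nontriviality R
  have hlt : (X ^ m : R[X]).degree < P.degree := by
    rw [degree_X_pow, degree_eq_natDegree hm.ne_zero]
    exact_mod_cast hmP
  rw [topCoeff, LinearMap.comp_apply, ← mk_X, ← map_pow, modByMonicHom_mk,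
    (modByMonic_eq_self_iff hm).2 hlt, lcoeff_apply, coeff_X_pow]
  simp only [eq_comm]

theorem topCoeff_coeff_divXSubRoot (hm : P.Monic) (hP : 0 < P.natDegree) (i : ℕ) :
    topCoeff hm ((divXSubRoot P).coeff i) = if i = 0 then 1 else 0 := by
  have hterm : ∀ k ∈ Finset.Icc (i + 1) P.natDegree,
      topCoeff hm (P.coeff k • root P ^ (k - i - 1)) =
        if k = P.natDegree + i then P.coeff k else 0 := by
    intro k hk
    rw [Finset.mem_Icc] at hk
    rw [map_smul, topCoeff_root_pow hm (by omega), smul_eq_mul]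
    split_ifs <;> first | omega | simp
  rw [coeff_divXSubRoot hm, map_sum, Finset.sum_congr rfl hterm, Finset.sum_ite_eq']
  split_ifs with hmem hi
  · rw [hi, add_zero, hm.coeff_natDegree]
  · simp only [Finset.mem_Icc] at hmem; omega
  · simp only [Finset.mem_Icc] at hmem; omega
  · rfl

end AdjoinRoot

theorem pairing_eigenvectors_associated_derivative_general (p : ℕ) [Fact p.Prime]
    (g : ℕ) (hg : 1 ≤ g)
    (P : Polynomial ℤ_[p]) (hmonic : P.Monic) (hdeg : P.natDegree = g)
    (B : AdjoinRoot P →ₗ[ℤ_[p]] AdjoinRoot P →ₗ[ℤ_[p]] ℤ_[p])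
    (hsym : ∀ t x y : AdjoinRoot P, B (t * x) y = B x (t * y))
    (hperf : Function.Bijective B)
    (BS : (AdjoinRoot P ⊗[ℤ_[p]] AdjoinRoot P) →ₗ[ℤ_[p]]
      (AdjoinRoot P ⊗[ℤ_[p]] AdjoinRoot P) →ₗ[ℤ_[p]] AdjoinRoot P)
    (hBS : ∀ x a y b : AdjoinRoot P,
      BS (x ⊗ₜ[ℤ_[p]] a) (y ⊗ₜ[ℤ_[p]] b) = B x y • (a * b))
    (e : AdjoinRoot P ⊗[ℤ_[p]] AdjoinRoot P)
    (he : e = ∑ i ∈ Finset.range g,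
      (∑ k ∈ Finset.Icc (i + 1) g, P.coeff k • AdjoinRoot.root P ^ (k - i - 1))
        ⊗ₜ[ℤ_[p]] (AdjoinRoot.root P ^ i))
    (u u' : (AdjoinRoot P)ˣ) :
    Associated
      (BS (((u : AdjoinRoot P) ⊗ₜ[ℤ_[p]] (1 : AdjoinRoot P)) * e)
        (((u' : AdjoinRoot P) ⊗ₜ[ℤ_[p]] (1 : AdjoinRoot P)) * e))
      (Polynomial.aeval (AdjoinRoot.root P) (Polynomial.derivative P)) := by
  subst hdeg he
  have hext : IsScalarExtension B BS := hBS
  have happly := hext.apply_eq_lmul'_mul hsym AdjoinRoot.tmul_one_mul_eigenvector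
  rw [← AdjoinRoot.eigenvector_eq_sum hmonic hg]
  obtain ⟨z, hz⟩ := hperf.surjective (AdjoinRoot.topCoeff hmonic)
  have hzw : z * BS 1 (AdjoinRoot.eigenvector P) = 1 := by
    calc z * BS 1 (AdjoinRoot.eigenvector P) = BS (z ⊗ₜ 1) (AdjoinRoot.eigenvector P) := by
          rw [happly (z ⊗ₜ 1), Algebra.TensorProduct.lmul'_apply_tmul, mul_one]
      _ = ∑ i ∈ Finset.range P.natDegree, AdjoinRoot.topCoeff hmonic
            ((AdjoinRoot.divXSubRoot P).coeff i) • AdjoinRoot.root P ^ i := by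
          simp [AdjoinRoot.eigenvector_eq_sum_coeff hg, hBS, hz]
      _ = 1 := by
          simp only [AdjoinRoot.topCoeff_coeff_divXSubRoot hmonic hg, ite_smul, one_smul,
            zero_smul, Finset.sum_ite_eq', Finset.mem_range, pow_zero]
          exact if_pos hg
  rw [← hext.apply_tmul_one_mul_swap hsym, ← mul_assoc, Algebra.TensorProduct.tmul_mul_tmul,
    mul_one, happly, map_mul, Algebra.TensorProduct.lmul'_apply_tmul, mul_one,
    AdjoinRoot.lmul'_eigenvector, mul_right_comm]
  exact associated_unit_mul_left _ _ ((u' * u).isUnit.mul (IsUnit.of_mul_eq_one_right z hzw))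

/-- Let `P ∈ ℤ_p[X]` be monic of degree `g ≥ 1` and Eisenstein at `p`,
let `S = ℤ_p[X]/(P)` with `π` the image of `X`, and let `B` be a perfect `ℤ_p`-bilinear
form on `S` satisfying `B(t·x, y) = B(x, t·y)`.  With
`e = Σ_{i=0}^{g-1} (Σ_{k=i+1}^{g} a_k π^{k-i-1}) ⊗ π^i` and `B_S` the `S`-valued
extension of `B`, for all units `u, u′ ∈ S^×` the element
`B_S((u ⊗ 1)·e, (u′ ⊗ 1)·e)` is an associate of `P′(π)` in `S`. -/
theorem pairing_eigenvectors_associated_derivative (p : ℕ) [Fact p.Prime]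
    (g : ℕ) (hg : 1 ≤ g)
    (P : Polynomial ℤ_[p]) (hmonic : P.Monic) (hdeg : P.natDegree = g)
    (heis : ∀ i < g, (p : ℤ_[p]) ∣ P.coeff i) (heis0 : ¬ (p : ℤ_[p]) ^ 2 ∣ P.coeff 0)
    (B : AdjoinRoot P →ₗ[ℤ_[p]] AdjoinRoot P →ₗ[ℤ_[p]] ℤ_[p])
    (hsym : ∀ t x y : AdjoinRoot P, B (t * x) y = B x (t * y))
    (hperf : Function.Bijective B)
    (BS : (AdjoinRoot P ⊗[ℤ_[p]] AdjoinRoot P) →ₗ[ℤ_[p]]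
      (AdjoinRoot P ⊗[ℤ_[p]] AdjoinRoot P) →ₗ[ℤ_[p]] AdjoinRoot P)
    (hBS : ∀ x a y b : AdjoinRoot P,
      BS (x ⊗ₜ[ℤ_[p]] a) (y ⊗ₜ[ℤ_[p]] b) = B x y • (a * b))
    (e : AdjoinRoot P ⊗[ℤ_[p]] AdjoinRoot P)
    (he : e = ∑ i ∈ Finset.range g,
      (∑ k ∈ Finset.Icc (i + 1) g, P.coeff k • AdjoinRoot.root P ^ (k - i - 1))
        ⊗ₜ[ℤ_[p]] (AdjoinRoot.root P ^ i))
    (u u' : (AdjoinRoot P)ˣ) :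
    Associated
      (BS (((u : AdjoinRoot P) ⊗ₜ[ℤ_[p]] (1 : AdjoinRoot P)) * e)
        (((u' : AdjoinRoot P) ⊗ₜ[ℤ_[p]] (1 : AdjoinRoot P)) * e))
      (Polynomial.aeval (AdjoinRoot.root P) (Polynomial.derivative P)) :=
  pairing_eigenvectors_associated_derivative_general p g hg P hmonic hdeg B hsym hperf BS hBS e he u
    u'
end

section
/- Let p be a prime, let P = X^g + a_{g−1}X^{g−1} + ⋯ + a_0 ∈ ℚ_p[X] be monic and irreducible of degree g ≥ 1 (set a_g = 1), let L = ℚ_p[X]/(P) (a field) with π the image of X, and set c_i := Σ_{k=i+1}^{g} a_k π^{k−i−1} ∈ L for 0 ≤ i ≤ g − 1. Let B : L × L → ℚ_p be a ℚ_p-bilinear form satisfying B(t·x, y) = B(x, t·y) for all t, x, y ∈ L. For m ∈ L set e(m) := Σ_{i=0}^{g−1} (c_i·m) ⊗ π^i ∈ L ⊗_{ℚ_p} L, and let B_L denote the L-valued extension of B determined by B_L(x ⊗ a, y ⊗ b) = B(x, y)·a·b. Then for all m, m′ ∈ L: Tr_{L/ℚ_p}( B_L(e(m), e(m′)) / P′(π)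 ) = Σ_{i=0}^{g−1} Tr_{L/ℚ_p}(π^i) · B(m, c_i·m′). -/
/-!
Let `d = P'(π)`. The dual basis of `1, π, …, π^{g-1}` under the trace form is `c_i / d`
(Euler's lemma: the `c_i` are the coefficients of `P / (X - π)`), so
`Σ_i Tr(x πⁱ) c_i = x d` for every `x ∈ L`; moreover `Σ_i c_i πⁱ = d`.
Expanding `B_L(e(m), e(m'))` and moving all the `c_j` to the right of `B` with `B(tx, y) = B(x, ty)`,
the first identity collapses the double sum to `B(m, (Σ_i c_i πⁱ) m') = B(m, d m')`, and then
the first identity at `x = 1` turns `d` back into `Σ_i Tr(πⁱ) c_i`.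
-/

open TensorProduct Polynomial

section MinpolyDiv

variable {R S : Type*} [CommRing R] [CommRing S] [Nontrivial S] [Algebra R S] {x : S}

theorem coeff_minpolyDiv_eq_sum (hx : IsIntegral R x) (i : ℕ) :
    (minpolyDiv R x).coeff i =
      ∑ k ∈ Finset.Icc (i + 1) (minpoly R x).natDegree, (minpoly R x).coeff k • x ^ (k - i - 1) := by
  rw [minpolyDiv, coeff_divByMonic_X_sub_C, (minpoly.monic hx).natDegree_map]
  refine Finset.sum_congr rfl fun k _ => ?_
  rw [coeff_map, Algebra.smul_def, mul_comm, Nat.sub_sub]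

theorem sum_coeff_minpolyDiv_mul_pow (hx : IsIntegral R x) :
    ∑ i ∈ Finset.range (minpoly R x).natDegree, (minpolyDiv R x).coeff i * x ^ i =
      aeval x (derivative (minpoly R x)) := by
  rw [← eval_minpolyDiv_self, eval_eq_sum_range' (natDegree_minpolyDiv_lt hx)]

end MinpolyDiv

theorem PowerBasis.sum_trace_mul_pow_smul_coeff_minpolyDiv {K L : Type*} [Field K] [Field L]
    [Algebra K L] [Algebra.IsSeparable K L] (pb : PowerBasis K L) (x : L) :
    ∑ i ∈ Finset.range pb.dim, Algebra.trace K L (x * pb.gen ^ i) • (minpolyDiv K pb.gen).coeff i =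
      x * aeval pb.gen (derivative (minpoly K pb.gen)) := by
  have : FiniteDimensional K L := pb.finite
  have hd : aeval pb.gen (derivative (minpoly K pb.gen)) ≠ 0 :=
    (Algebra.IsSeparable.isSeparable K pb.gen).aeval_derivative_ne_zero (minpoly.aeval K pb.gen)
  conv_rhs => rw [← pb.basis.traceDual.sum_repr x, Finset.sum_mul]
  rw [← Fin.sum_univ_eq_sum_range
    (fun i => Algebra.trace K L (x * pb.gen ^ i) • (minpolyDiv K pb.gen).coeff i)]
  refine Finset.sum_congr rfl fun i _ => ?_
  rw [Module.Basis.traceDual_repr_apply, Algebra.traceForm_apply, pb.coe_basis,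
    Module.Basis.traceDual_powerBasis_eq, smul_mul_assoc, div_mul_cancel₀ _ hd]

theorem LinearMap.sum_mul_apply_mul_right {K L ι : Type*} [CommSemiring K] [Semiring L]
    [Algebra K L] (B : L →ₗ[K] L →ₗ[K] K) (s : Finset ι) (r : ι → K) (w : ι → L) (x y : L) :
    ∑ i ∈ s, r i * B x (w i * y) = B x ((∑ i ∈ s, r i • w i) * y) := by
  simp only [Finset.sum_mul, map_sum, smul_mul_assoc, map_smul, smul_eq_mul]

theorem apply_sum_tmul_sum_tmul {K L ι : Type*} [CommSemiring K] [Semiring L] [Algebra K L]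
    {B : L →ₗ[K] L →ₗ[K] K} {BL : L ⊗[K] L →ₗ[K] L ⊗[K] L →ₗ[K] L}
    (hBL : ∀ x a y b : L, BL (x ⊗ₜ a) (y ⊗ₜ b) = B x y • (a * b))
    (s : Finset ι) (x y a b : ι → L) :
    BL (∑ i ∈ s, x i ⊗ₜ a i) (∑ j ∈ s, y j ⊗ₜ b j) =
      ∑ i ∈ s, ∑ j ∈ s, B (x i) (y j) • (a i * b j) := by
  simp only [map_sum, LinearMap.sum_apply, hBL]
  exact Finset.sum_comm

theorem apply_div_eq_sum_of_dual {K L ι : Type*} [CommRing K] [Field L] [Algebra K L]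
    {B : L →ₗ[K] L →ₗ[K] K} {BL : L ⊗[K] L →ₗ[K] L ⊗[K] L →ₗ[K] L}
    (hBL : ∀ x a y b : L, BL (x ⊗ₜ a) (y ⊗ₜ b) = B x y • (a * b))
    (hB : ∀ t x y : L, B (t * x) y = B x (t * y))
    (τ : L →ₗ[K] K) (s : Finset ι) (u v : ι → L) {d : L} (hd : d ≠ 0)
    (hdual : ∀ x, ∑ i ∈ s, τ (x * u i) • v i = x * d) (hsum : ∑ i ∈ s, v i * u i = d)
    (m m' : L) :
    τ (BL (∑ i ∈ s, (v i * m) ⊗ₜ u i) (∑ j ∈ s, (v j * m') ⊗ₜ u j) / d) =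
      ∑ i ∈ s, τ (u i) * B m (v i * m') := by
  have hrow : ∀ i, ∑ j ∈ s, B (v i * m) (v j * m') * τ (u i * d⁻¹ * u j) =
      B m (u i * (v i * m')) := by
    intro i
    calc ∑ j ∈ s, B (v i * m) (v j * m') * τ (u i * d⁻¹ * u j)
        = ∑ j ∈ s, τ (u i * d⁻¹ * u j) * B m (v j * (v i * m')) := by
          refine Finset.sum_congr rfl fun j _ => ?_
          rw [hB, mul_left_comm, mul_comm]
      _ = B m (u i * (v i * m')) := by
          rw [B.sum_mul_apply_mul_right, hdual, inv_mul_cancel_right₀ hd]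
  have hexpand : BL (∑ i ∈ s, (v i * m) ⊗ₜ u i) (∑ j ∈ s, (v j * m') ⊗ₜ u j) =
      ∑ i ∈ s, ∑ j ∈ s, B (v i * m) (v j * m') • (u i * u j) :=
    apply_sum_tmul_sum_tmul hBL s _ _ _ _
  calc τ (BL (∑ i ∈ s, (v i * m) ⊗ₜ u i) (∑ j ∈ s, (v j * m') ⊗ₜ u j) / d)
      = ∑ i ∈ s, ∑ j ∈ s, B (v i * m) (v j * m') * τ (u i * d⁻¹ * u j) := by
        rw [hexpand]
        simp only [div_eq_mul_inv, Finset.sum_mul, map_sum, smul_mul_assoc, map_smul,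
          smul_eq_mul, mul_right_comm (u _) (u _)]
    _ = B m ((∑ i ∈ s, v i * u i) * m') := by
        rw [Finset.sum_congr rfl fun i _ => hrow i, Finset.sum_mul, map_sum]
        exact Finset.sum_congr rfl fun i _ => by rw [mul_left_comm, mul_assoc]
    _ = ∑ i ∈ s, τ (u i) * B m (v i * m') := by
        rw [hsum, ← one_mul d, ← hdual, B.sum_mul_apply_mul_right]
        simp only [one_mul]

theorem trace_pairing_eigenvectors_general (p : ℕ) [Fact p.Prime] (g : ℕ)
    (P : Polynomial ℚ_[p]) (hmonic : P.Monic) [hirr : Fact (Irreducible P)]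
    (hdeg : P.natDegree = g)
    (c : ℕ → AdjoinRoot P)
    (hc : ∀ i, c i = ∑ k ∈ Finset.Icc (i + 1) g, P.coeff k • AdjoinRoot.root P ^ (k - i - 1))
    (B : AdjoinRoot P →ₗ[ℚ_[p]] AdjoinRoot P →ₗ[ℚ_[p]] ℚ_[p])
    (hsym : ∀ t x y : AdjoinRoot P, B (t * x) y = B x (t * y))
    (e : AdjoinRoot P → AdjoinRoot P ⊗[ℚ_[p]] AdjoinRoot P)
    (he : ∀ m, e m = ∑ i ∈ Finset.range g, (c i * m) ⊗ₜ[ℚ_[p]] (AdjoinRoot.root P ^ i))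
    (BL : (AdjoinRoot P ⊗[ℚ_[p]] AdjoinRoot P) →ₗ[ℚ_[p]]
      (AdjoinRoot P ⊗[ℚ_[p]] AdjoinRoot P) →ₗ[ℚ_[p]] AdjoinRoot P)
    (hBL : ∀ x a y b : AdjoinRoot P,
      BL (x ⊗ₜ[ℚ_[p]] a) (y ⊗ₜ[ℚ_[p]] b) = B x y • (a * b))
    (m m' : AdjoinRoot P) :
    Algebra.trace ℚ_[p] (AdjoinRoot P)
        (BL (e m) (e m') / Polynomial.aeval (AdjoinRoot.root P) (Polynomial.derivative P)) =
      ∑ i ∈ Finset.range g,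
        Algebra.trace ℚ_[p] (AdjoinRoot P) (AdjoinRoot.root P ^ i) * B m (c i * m') := by
  subst hdeg
  have hP0 : P ≠ 0 := hmonic.ne_zero
  have hmin : minpoly ℚ_[p] (AdjoinRoot.root P) = P := by
    rw [AdjoinRoot.minpoly_root hP0, hmonic.leadingCoeff, inv_one, map_one, mul_one]
  have hint : IsIntegral ℚ_[p] (AdjoinRoot.root P) := AdjoinRoot.isIntegral_root hP0
  have hcoeff : ∀ i, (minpolyDiv ℚ_[p] (AdjoinRoot.root P)).coeff i = c i := fun i => by
    rw [coeff_minpolyDiv_eq_sum hint, hc, hmin]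
  have : Module.Finite ℚ_[p] (AdjoinRoot P) := (AdjoinRoot.powerBasis hP0).finite
  have hd := (Algebra.IsSeparable.isSeparable ℚ_[p] (AdjoinRoot.root P)).aeval_derivative_ne_zero
    (minpoly.aeval ℚ_[p] (AdjoinRoot.root P))
  have hdual := (AdjoinRoot.powerBasis hP0).sum_trace_mul_pow_smul_coeff_minpolyDiv
  have hsum := sum_coeff_minpolyDiv_mul_pow hint
  simp only [AdjoinRoot.powerBasis_dim, AdjoinRoot.powerBasis_gen, hmin, hcoeff] at hdual hsum hd
  rw [he, he]
  exact apply_div_eq_sum_of_dual hBL hsym (Algebra.trace _ _) _ _ _ hd hdual hsum m m'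

/-- Let `P ∈ ℚ_p[X]` be monic irreducible of degree `g ≥ 1`, let
`L = ℚ_p[X]/(P)` with `π` the image of `X`, set `c_i = Σ_{k=i+1}^{g} a_k π^{k-i-1}`, and
let `B` be a `ℚ_p`-bilinear form on `L` with `B(t·x, y) = B(x, t·y)`.  With
`e(m) = Σ_{i=0}^{g-1} (c_i·m) ⊗ π^i` and `B_L` the `L`-valued extension of `B`, for all
`m, m′ ∈ L`:
`Tr_{L/ℚ_p}(B_L(e(m), e(m′)) / P′(π)) = Σ_{i=0}^{g-1} Tr_{L/ℚ_p}(π^i) · B(m, c_i·m′)`. -/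
theorem trace_pairing_eigenvectors (p : ℕ) [Fact p.Prime] (g : ℕ) (hg : 1 ≤ g)
    (P : Polynomial ℚ_[p]) (hmonic : P.Monic) [hirr : Fact (Irreducible P)]
    (hdeg : P.natDegree = g)
    (c : ℕ → AdjoinRoot P)
    (hc : ∀ i, c i = ∑ k ∈ Finset.Icc (i + 1) g, P.coeff k • AdjoinRoot.root P ^ (k - i - 1))
    (B : AdjoinRoot P →ₗ[ℚ_[p]] AdjoinRoot P →ₗ[ℚ_[p]] ℚ_[p])
    (hsym : ∀ t x y : AdjoinRoot P, B (t * x) y = B x (t * y))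
    (e : AdjoinRoot P → AdjoinRoot P ⊗[ℚ_[p]] AdjoinRoot P)
    (he : ∀ m, e m = ∑ i ∈ Finset.range g, (c i * m) ⊗ₜ[ℚ_[p]] (AdjoinRoot.root P ^ i))
    (BL : (AdjoinRoot P ⊗[ℚ_[p]] AdjoinRoot P) →ₗ[ℚ_[p]]
      (AdjoinRoot P ⊗[ℚ_[p]] AdjoinRoot P) →ₗ[ℚ_[p]] AdjoinRoot P)
    (hBL : ∀ x a y b : AdjoinRoot P,
      BL (x ⊗ₜ[ℚ_[p]] a) (y ⊗ₜ[ℚ_[p]] b) = B x y • (a * b))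
    (m m' : AdjoinRoot P) :
    Algebra.trace ℚ_[p] (AdjoinRoot P)
        (BL (e m) (e m') / Polynomial.aeval (AdjoinRoot.root P) (Polynomial.derivative P)) =
      ∑ i ∈ Finset.range g,
        Algebra.trace ℚ_[p] (AdjoinRoot P) (AdjoinRoot.root P ^ i) * B m (c i * m') :=
  trace_pairing_eigenvectors_general p g P hmonic (hirr := hirr) hdeg c hc B hsym e he BL hBL m m'
end

section
/- Let u, v, A, B, C, N ∈ ℚ with N ≠ 0, and suppose (u − B·v)·(u + B·v) + 4·N·A·C·v² = 1. Consider the 2 × 2 rational matrices W = [[0, −1], [N, 0]], M = [[u − B·v, −2·C·v], [2·N·A·v, u + B·v]], M′ = [[u − B·v, −2·A·v], [2·N·C·v, u + B·v]], and J = [[−1, 0], [0, 1]]. Then M′ is invertible and W · M · W⁻¹ = J · (M′)⁻¹ · J⁻¹. -/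
/-! Since `det M′ = 1`, the inverse of `M′` is its adjugate. Conjugation by `W` swaps the
diagonal entries of a `2 × 2` matrix and rescales the off-diagonal ones by `N` and `N⁻¹`,
while conjugation by `J` negates the off-diagonal ones; both sides therefore reduce to the
same explicit matrix. -/

namespace Matrix

variable {K : Type*} [Field K]

theorem inv_fin_two_of (a b c d : K) :
    (!![a, b; c, d])⁻¹ = (a * d - b * c)⁻¹ • !![d, -b; -c, a] := by
  rw [inv_def, det_fin_two_of, Ring.inverse_eq_inv', adjugate_fin_two_of]

theorem atkinLehner_mul_mul_inv_fin_two {N : K} (hN : N ≠ 0) (a b c d : K) :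
    !![0, -1; N, 0] * !![a, b; c, d] * (!![0, -1; N, 0])⁻¹ = !![d, -c / N; -(N * b), a] := by
  rw [inv_fin_two_of]
  ext i j
  fin_cases i <;> fin_cases j <;> simp [mul_apply] <;> field_simp

theorem diag_neg_one_one_mul_mul_inv_fin_two (a b c d : K) :
    !![-1, 0; 0, 1] * !![a, b; c, d] * (!![-1, 0; 0, 1])⁻¹ = !![a, -b; -c, d] := by
  rw [inv_fin_two_of]
  ext i j
  fin_cases i <;> fin_cases j <;> simp [mul_apply]

end Matrix

/-- Let `u, v, A, B, C, N ∈ ℚ` with `N ≠ 0` and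
`(u - Bv)(u + Bv) + 4NACv² = 1`.  With `W = [[0, -1], [N, 0]]`,
`M = [[u - Bv, -2Cv], [2NAv, u + Bv]]`, `M′ = [[u - Bv, -2Av], [2NCv, u + Bv]]` and
`J = [[-1, 0], [0, 1]]`, the matrix `M′` is invertible and
`W · M · W⁻¹ = J · (M′)⁻¹ · J⁻¹`. -/
theorem atkin_lehner_matrix_identity (u v A B C N : ℚ) (hN : N ≠ 0)
    (h : (u - B * v) * (u + B * v) + 4 * N * A * C * v ^ 2 = 1)
    (W M M' J : Matrix (Fin 2) (Fin 2) ℚ)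
    (hW : W = !![0, -1; N, 0])
    (hM : M = !![u - B * v, -2 * C * v; 2 * N * A * v, u + B * v])
    (hM' : M' = !![u - B * v, -2 * A * v; 2 * N * C * v, u + B * v])
    (hJ : J = !![-1, 0; 0, 1]) :
    IsUnit M' ∧ W * M * W⁻¹ = J * M'⁻¹ * J⁻¹ := by
  have hdet : M'.det = 1 := by
    rw [hM', Matrix.det_fin_two_of]
    linear_combination h
  refine ⟨(Matrix.isUnit_iff_isUnit_det M').mpr (hdet ▸ isUnit_one), ?_⟩
  rw [Matrix.inv_def M', hdet, Ring.inverse_one, one_smul, hW, hM, hM', hJ,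
    Matrix.adjugate_fin_two_of, Matrix.atkinLehner_mul_mul_inv_fin_two hN,
    Matrix.diag_neg_one_one_mul_mul_inv_fin_two]
  ext i j
  fin_cases i <;> fin_cases j <;> simp <;> field_simp
end
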